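/- Let λ ∈ (0,∞) satisfy ψ(λ) ≥ 0 and ψ'(λ) > 0 (in particular λ ≥ ρ). Define p^λ_{−1} := ψ(λ)/(λψ'(λ)), p^λ_0 := 0, and for every k ≥ 1, p^λ_k := (1/(λψ'(λ))) · ((σ²λ²/2)·1_{{k=1}} + ∫₀^∞ e^{−λy}(λy)^{k+1}/(k+1)! ν(dy)). Then (p^λ_k)_{k ≥ −1} is a probability distribution (p^λ_k ≥ 0 for all k and ∑_{k=−1}^∞ p^λ_k = 1), and for every r ∈ (0,1) the skeleton branching mechanism satisfies ψ'(λ) · ∑_{k=−1}^∞ (r^{k+1} − r) p^λ_k = ψ(λ(1−r))/λ. -/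

import Mathlib

open MeasureTheory Set

lemma exp_tsum (x : ℝ) : Real.exp x = ∑' n : ℕ, x ^ n / (Nat.factorial n : ℝ) := by
  rw [Real.exp_eq_exp_ℝ, NormedSpace.exp_eq_tsum_div]

lemma summable_shift2 (x : ℝ) :
    Summable (fun j : ℕ => x ^ (j + 2) / (Nat.factorial (j + 2) : ℝ)) :=
  (summable_nat_add_iff 2).mpr (Real.summable_pow_div_factorial x)

lemma exp_sub_tsum (x : ℝ) :
    ∑' j : ℕ, x ^ (j + 2) / (Nat.factorial (j + 2) : ℝ) = Real.exp x - 1 - x := by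
  have hs := Real.summable_pow_div_factorial x
  have h1 : Summable (fun n : ℕ => x ^ (n + 1) / (Nat.factorial (n + 1) : ℝ)) :=
    (summable_nat_add_iff 1).mpr hs
  rw [exp_tsum x, Summable.tsum_eq_zero_add hs, Summable.tsum_eq_zero_add h1]
  simp [Nat.factorial]

lemma quad_le_exp {x : ℝ} (hx : 0 ≤ x) : 1 + x + x ^ 2 / 2 ≤ Real.exp x := by
  rw [exp_tsum]
  have h := Summable.sum_le_tsum (f := fun n : ℕ => x ^ n / (Nat.factorial n : ℝ)) (Finset.range 3)
    (fun i _ => by positivity) (Real.summable_pow_div_factorial x)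
  refine le_trans (le_of_eq ?_) h
  rw [Finset.sum_range_succ, Finset.sum_range_succ, Finset.sum_range_succ]
  norm_num [Nat.factorial]

lemma exp_neg_quad {x : ℝ} (hx : 0 ≤ x) : Real.exp (-x) - 1 + x ≤ x ^ 2 / 2 := by
  have h := quad_le_exp hx
  have hp : (0:ℝ) < Real.exp x := Real.exp_pos x
  have he : Real.exp (-x) * Real.exp x = 1 := by
    rw [← Real.exp_add]; simp
  nlinarith [sq_nonneg x, sq_nonneg (x ^ 2), Real.exp_pos (-x), sq_nonneg (x * Real.exp (-x))]

lemma exp_sub_le {x : ℝ} (hx : 0 ≤ x) : Real.exp x - 1 - x ≤ x ^ 2 / 2 * Real.exp x := by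
  rw [← exp_sub_tsum, exp_tsum, ← tsum_mul_left]
  refine Summable.tsum_le_tsum (fun j => ?_) (summable_shift2 x)
    ((Real.summable_pow_div_factorial x).mul_left _)
  have h1 : x ^ (j + 2) = x ^ 2 * x ^ j := by ring
  have h2 : (2:ℝ) * (Nat.factorial j : ℝ) ≤ (Nat.factorial (j + 2) : ℝ) := by
    have : 2 * Nat.factorial j ≤ Nat.factorial (j + 2) := by
      rw [Nat.factorial_succ, Nat.factorial_succ]
      calc 2 * Nat.factorial j ≤ (j + 2) * Nat.factorial j := by
            exact Nat.mul_le_mul_right _ (by omega)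
        _ ≤ (j + 2) * ((j + 1) * Nat.factorial j) := by
            exact Nat.mul_le_mul_left _ (Nat.le_mul_of_pos_left _ (by omega))
    exact_mod_cast this
  calc x ^ (j + 2) / (Nat.factorial (j + 2) : ℝ)
      ≤ x ^ (j + 2) / (2 * (Nat.factorial j : ℝ)) :=
        div_le_div_of_nonneg_left (by positivity) (by positivity) h2
    _ = x ^ 2 / 2 * (x ^ j / (Nat.factorial j : ℝ)) := by
        have : (Nat.factorial j : ℝ) ≠ 0 := by positivity
        field_simp
        ring

lemma term_le_exp_sub {x : ℝ} (hx : 0 ≤ x) (j : ℕ) :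
    x ^ (j + 2) / (Nat.factorial (j + 2) : ℝ) ≤ Real.exp x - 1 - x := by
  rw [← exp_sub_tsum]
  exact Summable.le_tsum (summable_shift2 x) j (fun i _ => by positivity)

lemma one_sub_exp_neg_le {x : ℝ} : 1 - Real.exp (-x) ≤ x := by
  have := Real.add_one_le_exp (-x); linarith

lemma mul_exp_neg_le_one {x : ℝ} (hx : 0 ≤ x) : x * Real.exp (-x) ≤ 1 := by
  have h1 : x ≤ Real.exp x := (Real.add_one_le_exp x).trans' (by linarith) |>.trans le_rfl
  calc x * Real.exp (-x) ≤ Real.exp x * Real.exp (-x) :=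
        mul_le_mul_of_nonneg_right h1 (Real.exp_nonneg _)
    _ = 1 := by rw [← Real.exp_add]; simp

lemma disj_Ioo_Ici : Disjoint (Ioo (0:ℝ) 1) (Ici 1) := by
  simp [Set.disjoint_left, mem_Ioo, mem_Ici]

lemma integrable_of_min_bound {ν : Measure ℝ}
    (hν : IntegrableOn (fun y => min 1 (y ^ 2)) (Ioi 0) ν)
    {f : ℝ → ℝ} {s : Set ℝ} (hs : MeasurableSet s) (hsub : s ⊆ Ioi 0)
    (hm : AEStronglyMeasurable f (ν.restrict s)) {C : ℝ}
    (hb : ∀ y ∈ s, ‖f y‖ ≤ C * min 1 (y ^ 2)) : IntegrableOn f s ν := by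
  refine Integrable.mono' ((hν.mono_set hsub).const_mul C) hm ?_
  exact (ae_restrict_mem hs).mono hb

lemma min_eq_sq {y : ℝ} (h0 : 0 < y) (h1 : y < 1) : min 1 (y ^ 2) = y ^ 2 :=
  min_eq_right (by nlinarith)

lemma min_eq_one' {y : ℝ} (h1 : 1 ≤ y) : min 1 (y ^ 2) = 1 :=
  min_eq_left (by nlinarith)

lemma intA {ν : Measure ℝ}
    (hν : IntegrableOn (fun y => min 1 (y ^ 2)) (Ioi 0) ν) {q : ℝ} (hq : 0 ≤ q) :
    IntegrableOn
      (fun y => Real.exp (-q * y) - 1 + (if 0 < y ∧ y < 1 then q * y else 0)) (Ioi 0) ν := by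
  have hmeas : Measurable fun y : ℝ =>
      Real.exp (-q * y) - 1 + (if 0 < y ∧ y < 1 then q * y else 0) := by
    apply Measurable.add
    · fun_prop
    · exact Measurable.ite (measurableSet_Ioo (a := (0:ℝ)) (b := 1)) (by fun_prop)
        measurable_const
  refine integrable_of_min_bound hν measurableSet_Ioi subset_rfl hmeas.aestronglyMeasurable
    (C := max 1 (q ^ 2 / 2)) (fun y hy => ?_)
  have hy0 : 0 < y := hy
  by_cases hy1 : y < 1
  · rw [if_pos ⟨hy0, hy1⟩, min_eq_sq hy0 hy1]
    have hnn : 0 ≤ Real.exp (-q * y) - 1 + q * y := by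
      have := Real.add_one_le_exp (-(q * y))
      rw [neg_mul]; linarith
    rw [Real.norm_eq_abs, abs_of_nonneg hnn]
    have hb := exp_neg_quad (x := q * y) (by positivity)
    rw [neg_mul]
    have : (q * y) ^ 2 / 2 ≤ max 1 (q ^ 2 / 2) * y ^ 2 := by
      have h2 : (q * y) ^ 2 / 2 = q ^ 2 / 2 * y ^ 2 := by ring
      rw [h2]
      exact mul_le_mul_of_nonneg_right (le_max_right _ _) (sq_nonneg y)
    linarith
  · push_neg at hy1
    rw [if_neg (by rintro ⟨-, h⟩; exact absurd h (not_lt.mpr hy1)), min_eq_one' hy1, add_zero,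
      mul_one]
    have h1 : Real.exp (-q * y) ≤ 1 := Real.exp_le_one_iff.mpr (by nlinarith)
    have h2 : 0 < Real.exp (-q * y) := Real.exp_pos _
    rw [Real.norm_eq_abs, abs_le]
    have := le_max_left 1 (q ^ 2 / 2)
    constructor <;> linarith

lemma intB {ν : Measure ℝ}
    (hν : IntegrableOn (fun y => min 1 (y ^ 2)) (Ioi 0) ν) {l : ℝ} (hl : 0 < l) :
    IntegrableOn (fun y => y * (1 - Real.exp (-l * y))) (Ioo 0 1) ν := by
  refine integrable_of_min_bound hν measurableSet_Ioo Ioo_subset_Ioi_self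
    (Measurable.aestronglyMeasurable (by fun_prop)) (C := l) (fun y hy => ?_)
  obtain ⟨hy0, hy1⟩ := hy
  rw [min_eq_sq hy0 hy1]
  have h1 : 1 - Real.exp (-l * y) ≤ l * y := by
    have := one_sub_exp_neg_le (x := l * y); rw [neg_mul]; linarith
  have h2 : 0 ≤ 1 - Real.exp (-l * y) := by
    have : Real.exp (-l * y) ≤ 1 := Real.exp_le_one_iff.mpr (by nlinarith)
    linarith
  rw [Real.norm_eq_abs, abs_of_nonneg (by positivity)]
  nlinarith

lemma intC {ν : Measure ℝ}
    (hν : IntegrableOn (fun y => min 1 (y ^ 2)) (Ioi 0) ν) {l : ℝ} (hl : 0 < l) :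
    IntegrableOn (fun y => y * Real.exp (-l * y)) (Ici 1) ν := by
  refine integrable_of_min_bound hν measurableSet_Ici
    (fun y (hy : 1 ≤ y) => lt_of_lt_of_le zero_lt_one hy)
    (Measurable.aestronglyMeasurable (by fun_prop)) (C := 1 / l) (fun y hy => ?_)
  have hy1 : (1:ℝ) ≤ y := hy
  have hy0 : 0 < y := lt_of_lt_of_le zero_lt_one hy1
  rw [min_eq_one' hy1, mul_one]
  have h := mul_exp_neg_le_one (x := l * y) (by positivity)
  rw [Real.norm_eq_abs, abs_of_nonneg (by positivity)]
  rw [neg_mul]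
  rw [div_eq_mul_inv, one_mul, ← mul_le_mul_iff_right₀ hl, ← mul_assoc]
  calc l * y * Real.exp (-(l * y)) ≤ 1 := h
    _ = l * l⁻¹ := by field_simp

lemma intD {ν : Measure ℝ}
    (hν : IntegrableOn (fun y => min 1 (y ^ 2)) (Ioi 0) ν) {l : ℝ} (hl : 0 < l)
    {t : ℝ} (ht : 0 < t) (ht1 : t ≤ 1) :
    IntegrableOn
      (fun y => Real.exp (-l * y) * (Real.exp (t * (l * y)) - 1 - t * (l * y))) (Ioi 0) ν := by
  refine integrable_of_min_bound hν measurableSet_Ioi subset_rfl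
    (Measurable.aestronglyMeasurable (by fun_prop)) (C := max 1 (l ^ 2 / 2)) (fun y hy => ?_)
  have hy0 : 0 < y := hy
  set x : ℝ := t * (l * y) with hx
  have hx0 : 0 ≤ x := by positivity
  have hinner : 0 ≤ Real.exp x - 1 - x := by
    have := Real.add_one_le_exp x; linarith
  have hprod : Real.exp (-l * y) * Real.exp x = Real.exp (-l * y + x) := by
    rw [← Real.exp_add]
  have hexple : Real.exp (-l * y + x) ≤ 1 := by
    apply Real.exp_le_one_iff.mpr
    have : x ≤ l * y := by
      rw [hx]
      nlinarith
    linarith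
  rw [Real.norm_eq_abs, abs_of_nonneg (by positivity)]
  by_cases hy1 : y < 1
  · rw [min_eq_sq hy0 hy1]
    have hb := exp_sub_le hx0
    calc Real.exp (-l * y) * (Real.exp x - 1 - x)
        ≤ Real.exp (-l * y) * (x ^ 2 / 2 * Real.exp x) :=
          mul_le_mul_of_nonneg_left hb (Real.exp_nonneg _)
      _ = x ^ 2 / 2 * (Real.exp (-l * y) * Real.exp x) := by ring
      _ ≤ x ^ 2 / 2 * 1 := by
          rw [hprod]
          exact mul_le_mul_of_nonneg_left hexple (by positivity)
      _ ≤ max 1 (l ^ 2 / 2) * y ^ 2 := by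
          rw [mul_one, hx]
          have ht2 : t ^ 2 ≤ 1 := by nlinarith
          have h1 : (t * (l * y)) ^ 2 / 2 ≤ l ^ 2 / 2 * y ^ 2 := by nlinarith [sq_nonneg (l * y)]
          have h2 : l ^ 2 / 2 * y ^ 2 ≤ max 1 (l ^ 2 / 2) * y ^ 2 :=
            mul_le_mul_of_nonneg_right (le_max_right _ _) (sq_nonneg y)
          linarith
  · push_neg at hy1
    rw [min_eq_one' hy1, mul_one]
    calc Real.exp (-l * y) * (Real.exp x - 1 - x)
        ≤ Real.exp (-l * y) * Real.exp x := by
          have : Real.exp x - 1 - x ≤ Real.exp x := by linarith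
          exact mul_le_mul_of_nonneg_left this (Real.exp_nonneg _)
      _ ≤ 1 := by rw [hprod]; exact hexple
      _ ≤ max 1 (l ^ 2 / 2) := le_max_left _ _

lemma split_Ioi {ν : Measure ℝ} {f : ℝ → ℝ} (hf : IntegrableOn f (Ioi 0) ν) :
    ∫ y in Ioi (0:ℝ), f y ∂ν = (∫ y in Ioo (0:ℝ) 1, f y ∂ν) + ∫ y in Ici (1:ℝ), f y ∂ν := by
  rw [← setIntegral_union disj_Ioo_Ici measurableSet_Ici
    (hf.mono_set Ioo_subset_Ioi_self)
    (hf.mono_set (fun y (hy : 1 ≤ y) => lt_of_lt_of_le zero_lt_one hy)),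
    Ioo_union_Ici_eq_Ioi zero_lt_one]


/-- Branching mechanism without killing. -/
noncomputable def psi (σ γ : ℝ) (ν : Measure ℝ) (q : ℝ) : ℝ :=
  σ ^ 2 / 2 * q ^ 2 - γ * q +
    ∫ y in Ioi (0 : ℝ),
      (Real.exp (-q * y) - 1 + (if 0 < y ∧ y < 1 then q * y else 0)) ∂ν

/-- `ψ'(λ)`. -/
noncomputable def psiDeriv (σ γ : ℝ) (ν : Measure ℝ) (l : ℝ) : ℝ :=
  σ ^ 2 * l - γ + (∫ y in Ioo (0 : ℝ) 1, y * (1 - Real.exp (-l * y)) ∂ν) -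
    ∫ y in Ici (1 : ℝ), y * Real.exp (-l * y) ∂ν

lemma psi_key {σ γ : ℝ} {ν : Measure ℝ}
    (hν : IntegrableOn (fun y => min 1 (y ^ 2)) (Ioi 0) ν)
    {lam : ℝ} (hlam : 0 < lam) {r : ℝ} (hr0 : 0 < r) (hr1 : r ≤ 1) :
    psi σ γ ν (lam * (1 - r)) =
      psi σ γ ν lam + σ ^ 2 * lam ^ 2 * r ^ 2 / 2 +
        (∫ y in Ioi (0:ℝ),
          Real.exp (-lam * y) * (Real.exp (r * (lam * y)) - 1 - r * (lam * y)) ∂ν) -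
        lam * r * psiDeriv σ γ ν lam := by
  have hq0 : 0 ≤ lam * (1 - r) := by nlinarith
  have hFq := intA hν hq0
  have hFl := intA hν hlam.le
  have hH := intD hν hlam hr0 hr1
  have hB := intB hν hlam
  have hC := intC hν hlam
  set Fq : ℝ → ℝ := fun y =>
    Real.exp (-(lam * (1 - r)) * y) - 1 +
      (if 0 < y ∧ y < 1 then lam * (1 - r) * y else 0) with hFqdef
  set Fl : ℝ → ℝ := fun y =>
    Real.exp (-lam * y) - 1 + (if 0 < y ∧ y < 1 then lam * y else 0) with hFldef
  set Hf : ℝ → ℝ := fun y =>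
    Real.exp (-lam * y) * (Real.exp (r * (lam * y)) - 1 - r * (lam * y)) with hHdef
  have hD : IntegrableOn (fun y => Fq y - Fl y - Hf y) (Ioi 0) ν := (hFq.sub hFl).sub hH
  have hIoo : (∫ y in Ioo (0:ℝ) 1, (Fq y - Fl y - Hf y) ∂ν) =
      -(lam * r) * ∫ y in Ioo (0:ℝ) 1, y * (1 - Real.exp (-lam * y)) ∂ν := by
    rw [← integral_const_mul]
    refine setIntegral_congr_fun measurableSet_Ioo (fun y hy => ?_)
    obtain ⟨hy0, hy1⟩ := hy
    simp only [hFqdef, hFldef, hHdef, if_pos (⟨hy0, hy1⟩ : 0 < y ∧ y < 1)]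
    have hexp : Real.exp (-(lam * (1 - r)) * y) =
        Real.exp (-lam * y) * Real.exp (r * (lam * y)) := by
      rw [← Real.exp_add]; congr 1; ring
    rw [hexp]; ring
  have hIci : (∫ y in Ici (1:ℝ), (Fq y - Fl y - Hf y) ∂ν) =
      (lam * r) * ∫ y in Ici (1:ℝ), y * Real.exp (-lam * y) ∂ν := by
    rw [← integral_const_mul]
    refine setIntegral_congr_fun measurableSet_Ici (fun y hy => ?_)
    have hy1 : (1:ℝ) ≤ y := hy
    have hneg : ¬ (0 < y ∧ y < 1) := by rintro ⟨-, h⟩; linarith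
    simp only [hFqdef, hFldef, hHdef, if_neg hneg]
    have hexp : Real.exp (-(lam * (1 - r)) * y) =
        Real.exp (-lam * y) * Real.exp (r * (lam * y)) := by
      rw [← Real.exp_add]; congr 1; ring
    rw [hexp]; ring
  have hmain : (∫ y in Ioi (0:ℝ), Fq y ∂ν) - (∫ y in Ioi (0:ℝ), Fl y ∂ν)
      - (∫ y in Ioi (0:ℝ), Hf y ∂ν) =
      -(lam * r) * (∫ y in Ioo (0:ℝ) 1, y * (1 - Real.exp (-lam * y)) ∂ν) +
      (lam * r) * ∫ y in Ici (1:ℝ), y * Real.exp (-lam * y) ∂ν := by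
    have h1 : (∫ y in Ioi (0:ℝ), (Fq y - Fl y - Hf y) ∂ν) =
        (∫ y in Ioi (0:ℝ), (Fq y - Fl y) ∂ν) - ∫ y in Ioi (0:ℝ), Hf y ∂ν :=
      integral_sub (hFq.sub hFl) hH
    have h2 : (∫ y in Ioi (0:ℝ), (Fq y - Fl y) ∂ν) =
        (∫ y in Ioi (0:ℝ), Fq y ∂ν) - ∫ y in Ioi (0:ℝ), Fl y ∂ν := integral_sub hFq hFl
    rw [← h2, ← h1, split_Ioi hD, hIoo, hIci]
  simp only [psi, psiDeriv]
  linear_combination hmain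

lemma series_swap {ν : Measure ℝ}
    (hν : IntegrableOn (fun y => min 1 (y ^ 2)) (Ioi 0) ν)
    {lam : ℝ} (hlam : 0 < lam) {t : ℝ} (ht : 0 < t) (ht1 : t ≤ 1) :
    Summable (fun j : ℕ => ∫ y in Ioi (0:ℝ),
        Real.exp (-lam * y) * (t * (lam * y)) ^ (j + 2) / (Nat.factorial (j + 2) : ℝ) ∂ν) ∧
    (∑' j : ℕ, ∫ y in Ioi (0:ℝ),
        Real.exp (-lam * y) * (t * (lam * y)) ^ (j + 2) / (Nat.factorial (j + 2) : ℝ) ∂ν) =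
      ∫ y in Ioi (0:ℝ),
        Real.exp (-lam * y) * (Real.exp (t * (lam * y)) - 1 - t * (lam * y)) ∂ν := by
  set H : ℝ → ℝ := fun y =>
    Real.exp (-lam * y) * (Real.exp (t * (lam * y)) - 1 - t * (lam * y)) with hHdef
  have hH : IntegrableOn H (Ioi 0) ν := intD hν hlam ht ht1
  set g : ℕ → ℝ → ℝ := fun j y =>
    Real.exp (-lam * y) * (t * (lam * y)) ^ (j + 2) / (Nat.factorial (j + 2) : ℝ) with hgdef
  have hgalt : ∀ j y, g j y =
      Real.exp (-lam * y) * ((t * (lam * y)) ^ (j + 2) / (Nat.factorial (j + 2) : ℝ)) := by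
    intro j y; simp only [hgdef]; ring
  have hnn : ∀ j, ∀ y ∈ Ioi (0:ℝ), 0 ≤ g j y := by
    intro j y hy
    have hy0 : 0 < y := hy
    rw [hgalt]
    have hx0 : 0 ≤ t * (lam * y) := by positivity
    positivity
  have hbound : ∀ j, ∀ y ∈ Ioi (0:ℝ), g j y ≤ H y := by
    intro j y hy
    have hy0 : 0 < y := hy
    have hx0 : 0 ≤ t * (lam * y) := by positivity
    rw [hgalt, hHdef]
    exact mul_le_mul_of_nonneg_left (term_le_exp_sub hx0 j) (Real.exp_nonneg _)
  have hmeas : ∀ j, AEStronglyMeasurable (g j) (ν.restrict (Ioi 0)) := fun j =>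
    Measurable.aestronglyMeasurable (by simp only [hgdef]; fun_prop)
  have hgint : ∀ j, IntegrableOn (g j) (Ioi 0) ν := fun j =>
    Integrable.mono' hH (hmeas j) ((ae_restrict_mem measurableSet_Ioi).mono fun y hy => by
      rw [Real.norm_eq_abs, abs_of_nonneg (hnn j y hy)]; exact hbound j y hy)
  have hsumy : ∀ y : ℝ, Summable (fun j => g j y) := by
    intro y
    refine ((summable_shift2 (t * (lam * y))).mul_left (Real.exp (-lam * y))).congr fun j => ?_
    rw [hgalt]
  have htsum_y : ∀ y : ℝ, (∑' j : ℕ, g j y) = H y := by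
    intro y
    have : (∑' j : ℕ, g j y) = Real.exp (-lam * y) *
        ∑' j : ℕ, (t * (lam * y)) ^ (j + 2) / (Nat.factorial (j + 2) : ℝ) := by
      rw [← tsum_mul_left]
      exact tsum_congr fun j => hgalt j y
    rw [this, exp_sub_tsum, hHdef]
  have hpartial : ∀ n : ℕ,
      (∑ j ∈ Finset.range n, ∫ y in Ioi (0:ℝ), g j y ∂ν) ≤ ∫ y in Ioi (0:ℝ), H y ∂ν := by
    intro n
    rw [← integral_finset_sum _ (fun j _ => hgint j)]
    refine setIntegral_mono_on (integrable_finset_sum _ fun j _ => hgint j) hH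
      measurableSet_Ioi (fun y hy => ?_)
    calc (∑ j ∈ Finset.range n, g j y) ≤ ∑' j : ℕ, g j y :=
          Summable.sum_le_tsum _ (fun j _ => hnn j y hy) (hsumy y)
      _ = H y := htsum_y y
  have hsummable : Summable (fun j : ℕ => ∫ y in Ioi (0:ℝ), g j y ∂ν) :=
    summable_of_sum_range_le (fun n => setIntegral_nonneg measurableSet_Ioi (hnn n)) hpartial
  refine ⟨hsummable, ?_⟩
  have hnorm : (fun j : ℕ => ∫ y in Ioi (0:ℝ), ‖g j y‖ ∂ν) =
      fun j : ℕ => ∫ y in Ioi (0:ℝ), g j y ∂ν := by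
    funext j
    exact setIntegral_congr_fun measurableSet_Ioi fun y hy =>
      Real.norm_of_nonneg (hnn j y hy)
  have hswap := integral_tsum_of_summable_integral_norm (μ := ν.restrict (Ioi 0))
    (fun j => hgint j) (by rw [hnorm]; exact hsummable)
  rw [hswap]
  exact setIntegral_congr_fun measurableSet_Ioi fun y _ => htsum_y y

/-- The offspring distribution `(p^λ_k)_{k ≥ −1}` of the skeleton, reindexed by
`j = k + 1 ∈ ℕ`:  `pcoef j = p^λ_{j−1}`.  Thus `pcoef 0 = p^λ_{−1} = ψ(λ)/(λψ'(λ))`,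
`pcoef 1 = p^λ_0 = 0`, and for `k = j − 1 ≥ 1`,
`pcoef j = (1/(λψ'(λ)))((σ²λ²/2)1_{k=1} + ∫₀^∞ e^{−λy}(λy)^{k+1}/(k+1)! ν(dy))`. -/
noncomputable def pcoef (σ γ lam : ℝ) (ν : Measure ℝ) : ℕ → ℝ
  | 0 => psi σ γ ν lam / (lam * psiDeriv σ γ ν lam)
  | 1 => 0
  | (j + 2) =>
      1 / (lam * psiDeriv σ γ ν lam) *
        ((if j = 0 then σ ^ 2 * lam ^ 2 / 2 else 0) +
          ∫ y in Ioi (0 : ℝ),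
            Real.exp (-lam * y) * (lam * y) ^ (j + 2) / (Nat.factorial (j + 2) : ℝ) ∂ν)

lemma psi_zero (σ γ : ℝ) (ν : Measure ℝ) : psi σ γ ν 0 = 0 := by
  simp [psi]

/-- When `ψ(λ) ≥ 0` and `ψ'(λ) > 0` (in particular `λ ≥ ρ`), the coefficients
`(p^λ_k)_{k ≥ −1}` form a probability distribution, and the skeleton branching
mechanism satisfies `ψ'(λ)∑_{k≥−1}(r^{k+1} − r)p^λ_k = ψ(λ(1−r))/λ` for `r ∈ (0,1)`.
(Here the sum over `k ≥ −1` is reindexed by `j = k + 1 ∈ ℕ`, so `r^{k+1} = r^j`.) -/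
theorem skeleton_offspring_distribution
    (σ γ : ℝ) (hσ : 0 ≤ σ) (ν : Measure ℝ)
    (hν : IntegrableOn (fun y => min 1 (y ^ 2)) (Ioi 0) ν)
    (lam : ℝ) (hlam : 0 < lam)
    (hψ : 0 ≤ psi σ γ ν lam) (hψ' : 0 < psiDeriv σ γ ν lam) :
    (∀ j : ℕ, 0 ≤ pcoef σ γ lam ν j) ∧
    Summable (pcoef σ γ lam ν) ∧
    (∑' j : ℕ, pcoef σ γ lam ν j) = 1 ∧
    ∀ r ∈ Ioo (0 : ℝ) 1,
      Summable (fun j : ℕ => (r ^ j - r) * pcoef σ γ lam ν j) ∧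
      psiDeriv σ γ ν lam * ∑' j : ℕ, (r ^ j - r) * pcoef σ γ lam ν j
        = psi σ γ ν (lam * (1 - r)) / lam := by
  have hI : 0 < lam * psiDeriv σ γ ν lam := mul_pos hlam hψ'
  -- the integrals appearing in `pcoef`
  set v : ℕ → ℝ := fun j => ∫ y in Ioi (0 : ℝ),
      Real.exp (-lam * y) * (lam * y) ^ (j + 2) / (Nat.factorial (j + 2) : ℝ) ∂ν with hvdef
  have hvnn : ∀ j, 0 ≤ v j := by
    intro j
    refine setIntegral_nonneg measurableSet_Ioi fun y hy => ?_
    have hy0 : 0 < y := hy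
    have : 0 ≤ lam * y := by positivity
    positivity
  -- t = 1 instance of the swap lemma
  have hone : ∀ j : ℕ, (∫ y in Ioi (0:ℝ),
      Real.exp (-lam * y) * (1 * (lam * y)) ^ (j + 2) / (Nat.factorial (j + 2) : ℝ) ∂ν)
      = v j := by
    intro j; simp only [one_mul, hvdef]
  obtain ⟨hs1, ht1⟩ := series_swap hν hlam (t := 1) zero_lt_one le_rfl
  have hv : Summable v := hs1.congr hone
  have htsumv : (∑' j : ℕ, v j) = ∫ y in Ioi (0:ℝ),
      Real.exp (-lam * y) * (Real.exp (1 * (lam * y)) - 1 - 1 * (lam * y)) ∂ν := by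
    rw [← ht1]; exact tsum_congr fun j => (hone j).symm
  -- the identity λψ' = ψ(λ) + σ²λ²/2 + S₁
  have hK1 : lam * psiDeriv σ γ ν lam = psi σ γ ν lam + σ ^ 2 * lam ^ 2 / 2 +
      ∫ y in Ioi (0:ℝ),
        Real.exp (-lam * y) * (Real.exp (1 * (lam * y)) - 1 - 1 * (lam * y)) ∂ν := by
    have hk := psi_key (σ := σ) (γ := γ) hν hlam (r := 1) zero_lt_one le_rfl
    rw [show lam * (1 - 1) = 0 by ring, psi_zero] at hk
    nlinarith [hk]
  -- equations for `pcoef`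
  have hp2 : ∀ j : ℕ, pcoef σ γ lam ν (j + 2) = 1 / (lam * psiDeriv σ γ ν lam) *
      ((if j = 0 then σ ^ 2 * lam ^ 2 / 2 else 0) + v j) := fun j => rfl
  have hp0 : pcoef σ γ lam ν 0 = psi σ γ ν lam / (lam * psiDeriv σ γ ν lam) := rfl
  have hp1 : pcoef σ γ lam ν 1 = 0 := rfl
  -- nonnegativity
  have hpos : ∀ j : ℕ, 0 ≤ pcoef σ γ lam ν j := by
    intro j
    match j with
    | 0 => rw [hp0]; positivity
    | 1 => rw [hp1]
    | (j + 2) =>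
      rw [hp2]
      have h1 : 0 ≤ (if j = 0 then σ ^ 2 * lam ^ 2 / 2 else 0) := by positivity
      have := hvnn j
      positivity
  -- summability of δ
  have hδ : Summable (fun j : ℕ => if j = 0 then σ ^ 2 * lam ^ 2 / 2 else 0) :=
    summable_of_ne_finset_zero (s := {0}) (fun b hb => by
      simp only [Finset.mem_singleton] at hb; simp [hb])
  have h2sum : Summable (fun j : ℕ => pcoef σ γ lam ν (j + 2)) :=
    ((hδ.add hv).mul_left (1 / (lam * psiDeriv σ γ ν lam))).congr fun j => (hp2 j).symm
  have hsumm : Summable (pcoef σ γ lam ν) := (summable_nat_add_iff 2).mp h2sum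
  have hmass : (∑' j : ℕ, pcoef σ γ lam ν j) = 1 := by
    have h1sum : Summable (fun j : ℕ => pcoef σ γ lam ν (j + 1)) :=
      (summable_nat_add_iff 1).mpr hsumm
    have e2 : (∑' b : ℕ, pcoef σ γ lam ν (b + 1 + 1)) =
        ∑' b : ℕ, pcoef σ γ lam ν (b + 2) := by norm_num
    have etail : (∑' j : ℕ, pcoef σ γ lam ν (j + 2)) = 1 / (lam * psiDeriv σ γ ν lam) *
        (σ ^ 2 * lam ^ 2 / 2 + ∑' j : ℕ, v j) := by
      calc (∑' j : ℕ, pcoef σ γ lam ν (j + 2))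
          = ∑' j : ℕ, 1 / (lam * psiDeriv σ γ ν lam) *
            ((if j = 0 then σ ^ 2 * lam ^ 2 / 2 else 0) + v j) := tsum_congr hp2
        _ = 1 / (lam * psiDeriv σ γ ν lam) *
            ∑' j : ℕ, ((if j = 0 then σ ^ 2 * lam ^ 2 / 2 else 0) + v j) := tsum_mul_left
        _ = _ := by rw [Summable.tsum_add hδ hv, tsum_ite_eq]
    rw [Summable.tsum_eq_zero_add hsumm, Summable.tsum_eq_zero_add h1sum, e2, etail, hp0, hp1]
    have hKv : psi σ γ ν lam + (σ ^ 2 * lam ^ 2 / 2 + ∑' j : ℕ, v j)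
        = lam * psiDeriv σ γ ν lam := by
      rw [htsumv]; linarith [hK1]
    rw [zero_add, one_div, inv_mul_eq_div, ← add_div, hKv, div_self hI.ne']
  refine ⟨hpos, hsumm, hmass, ?_⟩
  · -- the generating-function identity
    rintro r ⟨hr0, hr1⟩
    obtain ⟨hsr, htr⟩ := series_swap hν hlam (t := r) hr0 hr1.le
    have hrel : ∀ j : ℕ, (∫ y in Ioi (0:ℝ),
        Real.exp (-lam * y) * (r * (lam * y)) ^ (j + 2) / (Nat.factorial (j + 2) : ℝ) ∂ν)
        = r ^ (j + 2) * v j := by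
      intro j
      rw [hvdef, ← integral_const_mul]
      exact setIntegral_congr_fun measurableSet_Ioi fun y _ => by rw [mul_pow]; ring
    have hw : Summable (fun j : ℕ => r ^ (j + 2) * v j) := hsr.congr hrel
    have htw : (∑' j : ℕ, r ^ (j + 2) * v j) = ∫ y in Ioi (0:ℝ),
        Real.exp (-lam * y) * (Real.exp (r * (lam * y)) - 1 - r * (lam * y)) ∂ν := by
      rw [← htr]; exact tsum_congr fun j => (hrel j).symm
    -- the sequence a j = r^j * pcoef j
    have hA : Summable (fun j : ℕ => r ^ j * pcoef σ γ lam ν j) := by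
      refine Summable.of_nonneg_of_le
        (fun j => mul_nonneg (pow_nonneg hr0.le j) (hpos j)) (fun j => ?_) hsumm
      exact mul_le_of_le_one_left (hpos j) (pow_le_one₀ hr0.le hr1.le)
    have hSsub : Summable (fun j : ℕ => r * pcoef σ γ lam ν j) := hsumm.mul_left r
    have hsumr : Summable (fun j : ℕ => (r ^ j - r) * pcoef σ γ lam ν j) :=
      (hA.sub hSsub).congr fun j => by ring
    refine ⟨hsumr, ?_⟩
    -- compute the tsum of a
    have hδr : Summable (fun j : ℕ => if j = 0 then σ ^ 2 * lam ^ 2 * r ^ 2 / 2 else 0) :=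
      summable_of_ne_finset_zero (s := {0}) (fun b hb => by
        simp only [Finset.mem_singleton] at hb; simp [hb])
    have ha2 : ∀ j : ℕ, r ^ (j + 2) * pcoef σ γ lam ν (j + 2) =
        1 / (lam * psiDeriv σ γ ν lam) *
          ((if j = 0 then σ ^ 2 * lam ^ 2 * r ^ 2 / 2 else 0) + r ^ (j + 2) * v j) := by
      intro j
      rw [hp2]
      by_cases h : j = 0
      · subst h; rw [if_pos rfl, if_pos rfl]; ring
      · simp only [if_neg h]; ring
    have hA2 : Summable (fun j : ℕ => r ^ (j + 2) * pcoef σ γ lam ν (j + 2)) :=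
      ((hδr.add hw).mul_left _).congr fun j => (ha2 j).symm
    have hA1 : Summable (fun j : ℕ => r ^ (j + 1) * pcoef σ γ lam ν (j + 1)) := by
      have := (summable_nat_add_iff (f := fun j : ℕ => r ^ j * pcoef σ γ lam ν j) 1).mpr hA
      simpa using this
    have etail : (∑' j : ℕ, r ^ (j + 2) * pcoef σ γ lam ν (j + 2)) =
        1 / (lam * psiDeriv σ γ ν lam) * (σ ^ 2 * lam ^ 2 * r ^ 2 / 2 +
          ∑' j : ℕ, r ^ (j + 2) * v j) := by
      calc (∑' j : ℕ, r ^ (j + 2) * pcoef σ γ lam ν (j + 2))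
          = ∑' j : ℕ, 1 / (lam * psiDeriv σ γ ν lam) *
            ((if j = 0 then σ ^ 2 * lam ^ 2 * r ^ 2 / 2 else 0) + r ^ (j + 2) * v j) :=
            tsum_congr ha2
        _ = 1 / (lam * psiDeriv σ γ ν lam) *
            ∑' j : ℕ, ((if j = 0 then σ ^ 2 * lam ^ 2 * r ^ 2 / 2 else 0) + r ^ (j + 2) * v j) :=
            tsum_mul_left
        _ = _ := by rw [Summable.tsum_add hδr hw, tsum_ite_eq]
    have eA : (∑' j : ℕ, r ^ j * pcoef σ γ lam ν j) =
        pcoef σ γ lam ν 0 + 1 / (lam * psiDeriv σ γ ν lam) * (σ ^ 2 * lam ^ 2 * r ^ 2 / 2 +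
          ∑' j : ℕ, r ^ (j + 2) * v j) := by
      rw [Summable.tsum_eq_zero_add hA, Summable.tsum_eq_zero_add hA1]
      have e2' : (∑' b : ℕ, r ^ (b + 1 + 1) * pcoef σ γ lam ν (b + 1 + 1)) =
          ∑' b : ℕ, r ^ (b + 2) * pcoef σ γ lam ν (b + 2) := by norm_num
      rw [e2', etail, hp1, hp0]
      ring
    have hsub := Summable.tsum_sub hA hSsub
    have etsum : (∑' j : ℕ, (r ^ j - r) * pcoef σ γ lam ν j) =
        (∑' j : ℕ, r ^ j * pcoef σ γ lam ν j) - r := by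
      calc (∑' j : ℕ, (r ^ j - r) * pcoef σ γ lam ν j)
          = ∑' j : ℕ, (r ^ j * pcoef σ γ lam ν j - r * pcoef σ γ lam ν j) :=
            tsum_congr fun j => by ring
        _ = (∑' j : ℕ, r ^ j * pcoef σ γ lam ν j) - ∑' j : ℕ, r * pcoef σ γ lam ν j := hsub
        _ = _ := by rw [tsum_mul_left, hmass, mul_one]
    have hk := psi_key (σ := σ) (γ := γ) hν hlam (r := r) hr0 hr1.le
    rw [etsum, eA, htw, hp0, hk]
    field_simp
    ring
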